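/- For every n ≥ 1, the weighted sum of the second-order Eulerian numbers by the row index satisfies 3·∑_{(k,l)} k·A_n(k,l) = (2n+1)!!; equivalently, ∂_t A_n(t,s) evaluated at t = s = 1 equals (2n+1)!!/3, where A_n(t,s) = ∑_{(k,l)} A_n(k,l) t^k s^l. -/

import Mathlib

/-- Second-order Eulerian numbers `A n k l`: `A 1 1 1 = 1`, zero off `(1,1)` at `n = 1`,
zero whenever `k ≤ 0` or `l ≤ 0`, and satisfying the recurrence
`A (n+1) k l = k * A n k (l-1) + l * A n (k-1) l + (2n+3-k-l) * A n (k-1) (l-1)`. -/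
def A : ℕ → ℤ → ℤ → ℤ
  | 0, _, _ => 0
  | 1, k, l => if k = 1 ∧ l = 1 then 1 else 0
  | n + 2, k, l =>
      if k ≤ 0 ∨ l ≤ 0 then 0
      else k * A (n + 1) k (l - 1) + l * A (n + 1) (k - 1) l
            + (2 * ((n : ℤ) + 1) + 3 - k - l) * A (n + 1) (k - 1) (l - 1)

/-!
Write `M_n(w) = ∑_{(k,l)} w(k,l) A_n(k,l)` for a weight `w`. Substituting the recurrence and
shifting the indices of each of its three terms gives
`M_{n+1}(w) = M_n(k w(k,l+1) + l w(k+1,l) + (2n+1-k-l) w(k+1,l+1))`.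
For `w = 1` this says `M_{n+1}(1) = (2n+1) M_n(1)`, so `M_n(1) = (2n-1)!!`; for `w = k` it says
`M_{n+1}(k) = 2n M_n(k) + (2n+1) M_n(1)`, and `3 M_n(k) = (2n+1)!!` follows by induction.
-/

open Function Nat

theorem A_eq_zero_of_nonpos : ∀ (n : ℕ) {k l : ℤ}, k ≤ 0 ∨ l ≤ 0 → A n k l = 0
  | 0, _, _, _ => rfl
  | 1, _, _, h => by simp only [A]; split_ifs <;> omega
  | _ + 2, _, _, h => by simp only [A, if_pos h]

theorem A_eq_zero_of_lt : ∀ (n : ℕ) {k l : ℤ}, (n < k ∨ n < l) → A n k l = 0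
  | 0, _, _, _ => rfl
  | 1, _, _, h => by simp only [A]; split_ifs <;> omega
  | n + 2, k, l, h => by
    simp only [A]
    split_ifs
    · rfl
    · push_cast at h
      rw [A_eq_zero_of_lt (n + 1) (by push_cast; omega), A_eq_zero_of_lt (n + 1) (by push_cast; omega),
        A_eq_zero_of_lt (n + 1) (by push_cast; omega)]
      ring

theorem bounds_of_A_ne_zero {n : ℕ} {k l : ℤ} (h : A n k l ≠ 0) :
    1 ≤ k ∧ k ≤ n ∧ 1 ≤ l ∧ l ≤ n := by
  have h₁ := mt (A_eq_zero_of_nonpos n) h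
  have h₂ := mt (A_eq_zero_of_lt n) h
  omega

theorem A_succ {n : ℕ} (hn : 1 ≤ n) (k l : ℤ) :
    A (n + 1) k l = k * A n k (l - 1) + l * A n (k - 1) l
      + (2 * n + 3 - k - l) * A n (k - 1) (l - 1) := by
  obtain ⟨m, rfl⟩ := Nat.exists_eq_add_of_le' hn
  simp only [A]
  split_ifs with h
  · rw [A_eq_zero_of_nonpos _ (by omega), A_eq_zero_of_nonpos _ (by omega),
      A_eq_zero_of_nonpos _ (by omega)]
    ring
  · push_cast
    ring

@[fun_prop]
theorem hasFiniteSupport_A (n : ℕ) : HasFiniteSupport fun p : ℤ × ℤ => A n p.1 p.2 := by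
  refine (Set.finite_Icc ((1, 1) : ℤ × ℤ) (n, n)).subset fun p hp => ?_
  obtain ⟨hk1, hkn, hl1, hln⟩ := bounds_of_A_ne_zero hp
  exact ⟨Prod.mk_le_mk.2 ⟨hk1, hl1⟩, Prod.mk_le_mk.2 ⟨hkn, hln⟩⟩

@[fun_prop]
theorem hasFiniteSupport_A_sub (n : ℕ) (a b : ℤ) :
    HasFiniteSupport fun p : ℤ × ℤ => A n (p.1 - a) (p.2 - b) :=
  (hasFiniteSupport_A n).fun_comp_of_injective (g := fun p => p - (a, b)) sub_left_injective

/-- A genuine finite sum, since `A n` has finite support (`hasFiniteSupport_A`). -/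
noncomputable def moment (n : ℕ) (w : ℤ → ℤ → ℤ) : ℤ :=
  ∑ᶠ p : ℤ × ℤ, w p.1 p.2 * A n p.1 p.2

theorem moment_add (n : ℕ) (v w : ℤ → ℤ → ℤ) :
    moment n (fun k l => v k l + w k l) = moment n v + moment n w := by
  simp only [moment, add_mul]
  exact finsum_add_distrib (by fun_prop) (by fun_prop)

theorem moment_const_mul (n : ℕ) (c : ℤ) (w : ℤ → ℤ → ℤ) :
    moment n (fun k l => c * w k l) = c * moment n w := by
  simp only [moment, mul_finsum, mul_assoc]

theorem finsum_mul_A_sub (n : ℕ) (g : ℤ × ℤ → ℤ) (a b : ℤ) :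
    ∑ᶠ p : ℤ × ℤ, g p * A n (p.1 - a) (p.2 - b) = moment n fun k l => g (k + a, l + b) := by
  rw [← finsum_comp_equiv (Equiv.addRight (a, b)), moment]
  simp [Prod.add_def]

theorem moment_eq_sum (n : ℕ) (w : ℤ → ℤ → ℤ) :
    moment n w = ∑ k ∈ Finset.Icc 1 n, ∑ l ∈ Finset.Icc 1 n, w k l * A n k l := by
  let castPair : ℕ × ℕ ↪ ℤ × ℤ := Nat.castEmbedding.prodMap Nat.castEmbedding
  rw [moment, finsum_eq_sum_of_support_subset (s := (Finset.Icc 1 n ×ˢ Finset.Icc 1 n).map castPair),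
    Finset.sum_map, Finset.sum_product]
  · rfl
  · rintro ⟨k, l⟩ hp
    obtain ⟨hk1, hkn, hl1, hln⟩ := bounds_of_A_ne_zero (right_ne_zero_of_mul hp)
    simp only [Finset.coe_map, Set.mem_image, Finset.mem_coe, Finset.mem_product, Finset.mem_Icc]
    exact ⟨(k.toNat, l.toNat), by omega, by simp [castPair]; omega⟩

theorem moment_one_left (w : ℤ → ℤ → ℤ) : moment 1 w = w 1 1 := by
  rw [moment_eq_sum]
  simp [A]

theorem moment_succ {n : ℕ} (hn : 1 ≤ n) (w : ℤ → ℤ → ℤ) :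
    moment (n + 1) w = moment n fun k l =>
      k * w k (l + 1) + l * w (k + 1) l + (2 * n + 1 - k - l) * w (k + 1) (l + 1) := by
  have expand : ∀ p : ℤ × ℤ, w p.1 p.2 * A (n + 1) p.1 p.2 =
      p.1 * w p.1 p.2 * A n (p.1 - 0) (p.2 - 1) + p.2 * w p.1 p.2 * A n (p.1 - 1) (p.2 - 0)
        + (2 * n + 3 - p.1 - p.2) * w p.1 p.2 * A n (p.1 - 1) (p.2 - 1) := fun p => by
    rw [A_succ hn, sub_zero, sub_zero]
    ring
  rw [moment]
  simp only [expand]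
  rw [finsum_add_distrib (by fun_prop) (by fun_prop), finsum_add_distrib (by fun_prop) (by fun_prop),
    finsum_mul_A_sub, finsum_mul_A_sub, finsum_mul_A_sub, ← moment_add, ← moment_add]
  congr 1
  funext k l
  simp only [add_zero]
  ring

theorem moment_one_succ {n : ℕ} (hn : 1 ≤ n) : moment (n + 1) 1 = (2 * n + 1) * moment n 1 := by
  rw [moment_succ hn, ← moment_const_mul]
  congr 1
  funext k l
  simp only [Pi.one_apply]
  ring

theorem moment_fst_succ {n : ℕ} (hn : 1 ≤ n) :
    moment (n + 1) (fun k _ => k) = 2 * n * moment n (fun k _ => k) + (2 * n + 1) * moment n 1 := by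
  rw [moment_succ hn, ← moment_const_mul, ← moment_const_mul, ← moment_add]
  congr 1
  funext k l
  simp only [Pi.one_apply]
  ring

theorem moment_one_eq_doubleFactorial (n : ℕ) : moment (n + 1) 1 = (2 * n + 1)‼ := by
  induction n with
  | zero => simp [moment_one_left]
  | succ n ih =>
    rw [moment_one_succ (by omega), ih, show 2 * (n + 1) + 1 = 2 * n + 1 + 2 by ring,
      Nat.doubleFactorial_add_two]
    push_cast
    ring

theorem three_mul_moment_fst_eq_doubleFactorial (n : ℕ) :
    3 * moment (n + 1) (fun k _ => k) = (2 * n + 3)‼ := by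
  induction n with
  | zero => simp [moment_one_left]
  | succ n ih =>
    rw [moment_fst_succ (by omega), moment_one_eq_doubleFactorial,
      show 2 * (n + 1) + 3 = 2 * n + 1 + 2 + 2 by ring, Nat.doubleFactorial_add_two,
      Nat.doubleFactorial_add_two]
    rw [show 2 * n + 3 = 2 * n + 1 + 2 by ring, Nat.doubleFactorial_add_two] at ih
    push_cast at ih ⊢
    linear_combination 2 * (n + 1 : ℤ) * ih

/-- For every n ≥ 1, 3·∑_{(k,l)} k·A_n(k,l) = (2n+1)!!. -/
theorem stmt8 (n : ℕ) (hn : 1 ≤ n) :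
    3 * ∑ k ∈ Finset.Icc 1 n, ∑ l ∈ Finset.Icc 1 n, (k : ℤ) * A n (k : ℤ) (l : ℤ)
      = (Nat.doubleFactorial (2 * n + 1) : ℤ) := by
  obtain ⟨m, rfl⟩ := Nat.exists_eq_add_of_le' hn
  have h := three_mul_moment_fst_eq_doubleFactorial m
  rwa [moment_eq_sum, show 2 * m + 3 = 2 * (m + 1) + 1 by ring] at h
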